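/- Let σ : ℝ → ℝ³ be twice continuously differentiable with ‖σ(s)‖ = 1 and σ'(s) ≠ 0 for all s, and define r(s, β) = cos β · σ(s) + sin β · σ'(s)/‖σ'(s)‖. Then for all s and all β ∈ [0, π], the norm of the cross product of the partial derivatives satisfies ‖(∂r/∂s)(s, β) × (∂r/∂β)(s, β)‖ = sin β · |σ''(s) · (σ(s) × σ'(s))| / ‖σ'(s)‖². Consequently, for every θ ∈ [0, π] and s₁ ≤ s₂, the area of the region on the unit sphere swept by the tangent segment of angular length θ, namely ∫_{s₁}^{s₂} ∫₀^θ ‖∂_s r × ∂_β r‖ dβ ds, equals (1 − cos θ) · ∫_{s₁}^{s₂} |σ''(s) · (σ(s) × σ'(s))| / ‖σ'(s)‖² ds. -/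

import Mathlib

/-!
Write `T = σ' / ‖σ'‖` and `b = ∂_β r = -sin β • σ + cos β • T`. Then
`∂_s r = ‖σ'‖ • b + sin β • W` with `W = T' + ‖σ'‖ • σ`, so `∂_s r × b = sin β • (W × b)`.
Differentiating `‖σ‖ = 1`, `‖T‖ = 1` and `⟪σ, T⟫ = 0` shows that `W` is orthogonal to `σ` and `T`,
hence to the unit vector `b`, and Lagrange's identity gives
`‖W × b‖ = ‖W‖ = |⟪W, σ × T⟫| = |⟪σ'', σ × σ'⟫| / ‖σ'‖²`.
Integrating `sin β` over `[0, θ]` produces the factor `1 - cos θ`.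
-/

open Real intervalIntegral

noncomputable def cross3 (a b : EuclideanSpace ℝ (Fin 3)) : EuclideanSpace ℝ (Fin 3) :=
  (WithLp.equiv 2 (Fin 3 → ℝ)).symm
    (crossProduct ((WithLp.equiv 2 (Fin 3 → ℝ)) a) ((WithLp.equiv 2 (Fin 3 → ℝ)) b))

open scoped RealInnerProductSpace

local notation "ℝ³" => EuclideanSpace ℝ (Fin 3)

section Cross3

open Matrix

lemma real_inner_eq_dotProduct (x y : ℝ³) : ⟪x, y⟫ = x.ofLp ⬝ᵥ y.ofLp :=
  dotProduct_comm _ _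

lemma ofLp_cross3 (a b : ℝ³) : (cross3 a b).ofLp = a.ofLp ⨯₃ b.ofLp := rfl

@[simp] lemma cross3_self (a : ℝ³) : cross3 a a = 0 := by
  simp [cross3]

@[simp] lemma cross3_add_left (a b c : ℝ³) : cross3 (a + b) c = cross3 a c + cross3 b c := by
  simp [cross3]

@[simp] lemma cross3_smul_left (k : ℝ) (a b : ℝ³) : cross3 (k • a) b = k • cross3 a b := by
  simp [cross3]

@[simp] lemma cross3_smul_right (k : ℝ) (a b : ℝ³) : cross3 a (k • b) = k • cross3 a b := by
  simp [cross3]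

@[simp] lemma inner_self_cross3 (a b : ℝ³) : ⟪a, cross3 a b⟫ = 0 := by
  rw [real_inner_eq_dotProduct, ofLp_cross3, dot_self_cross]

@[simp] lemma inner_cross3_self (a b : ℝ³) : ⟪b, cross3 a b⟫ = 0 := by
  rw [real_inner_eq_dotProduct, ofLp_cross3, dot_cross_self]

lemma inner_cross3_cross3 (a b c d : ℝ³) :
    ⟪cross3 a b, cross3 c d⟫ = ⟪a, c⟫ * ⟪b, d⟫ - ⟪a, d⟫ * ⟪b, c⟫ := by
  simp only [real_inner_eq_dotProduct, ofLp_cross3, cross_dot_cross]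

lemma cross3_cross3 (a b c : ℝ³) : cross3 a (cross3 b c) = ⟪a, c⟫ • b - ⟪a, b⟫ • c := by
  apply (WithLp.equiv 2 (Fin 3 → ℝ)).injective
  simp [real_inner_eq_dotProduct, ofLp_cross3, cross_cross_eq_smul_sub_smul',
    dotProduct_comm b.ofLp]

lemma norm_cross3_sq (a b : ℝ³) : ‖cross3 a b‖ ^ 2 = ‖a‖ ^ 2 * ‖b‖ ^ 2 - ⟪a, b⟫ ^ 2 := by
  simp only [← real_inner_self_eq_norm_sq, inner_cross3_cross3, real_inner_comm b a]
  ring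

lemma norm_cross3_of_inner_eq_zero {a b : ℝ³} (h : ⟪a, b⟫ = 0) :
    ‖cross3 a b‖ = ‖a‖ * ‖b‖ := by
  rw [← sq_eq_sq₀ (norm_nonneg _) (by positivity), norm_cross3_sq, h]
  ring

/-- This is where dimension three enters: `w ⊥ a, b` forces `w × (a × b) = 0`. -/
lemma norm_mul_norm_cross3_eq_abs_inner {w a b : ℝ³} (ha : ⟪w, a⟫ = 0) (hb : ⟪w, b⟫ = 0) :
    ‖w‖ * ‖cross3 a b‖ = |⟪w, cross3 a b⟫| := by
  have h := norm_cross3_sq w (cross3 a b)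
  rw [cross3_cross3, ha, hb, zero_smul, zero_smul, sub_zero, norm_zero] at h
  rw [← sq_eq_sq₀ (by positivity) (abs_nonneg _), sq_abs]
  linear_combination -h

lemma norm_cross3_smul_add_sweep {x t w : ℝ³} (hx : ‖x‖ = 1) (ht : ‖t‖ = 1)
    (hxt : ⟪x, t⟫ = 0) (hwx : ⟪w, x⟫ = 0) (hwt : ⟪w, t⟫ = 0) (c β : ℝ) :
    ‖cross3 (c • (-sin β • x + cos β • t) + sin β • w) (-sin β • x + cos β • t)‖
      = |sin β| * |⟪w, cross3 x t⟫| := by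
  set b := -sin β • x + cos β • t
  have hb : ‖b‖ = 1 := by
    rw [← sq_eq_sq₀ (norm_nonneg _) zero_le_one, one_pow, norm_add_sq_real, norm_smul, norm_smul,
      real_inner_smul_left, real_inner_smul_right, hxt, hx, ht]
    simp only [norm_eq_abs, mul_pow, sq_abs]
    linear_combination sin_sq_add_cos_sq β
  have hwb : ⟪w, b⟫ = 0 := by
    simp [b, inner_add_right, real_inner_smul_right, hwx, hwt]
  rw [cross3_add_left, cross3_smul_left, cross3_self, smul_zero, zero_add, cross3_smul_left,
    norm_smul, norm_cross3_of_inner_eq_zero hwb, hb, mul_one, norm_eq_abs,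
    ← norm_mul_norm_cross3_eq_abs_inner hwx hwt, norm_cross3_of_inner_eq_zero hxt, hx, ht,
    mul_one, mul_one]

end Cross3

section InnerProductSpace

variable {E : Type*} [NormedAddCommGroup E] [InnerProductSpace ℝ E]

lemma HasDerivAt.inner_add_inner_eq_zero {f g : ℝ → E} {f' g' : E} {t c : ℝ}
    (hf : HasDerivAt f f' t) (hg : HasDerivAt g g' t) (hc : ∀ u, ⟪f u, g u⟫ = c) :
    ⟪f t, g'⟫ + ⟪f', g t⟫ = 0 :=
  (hf.inner ℝ hg).unique (by simpa only [funext hc] using hasDerivAt_const t c)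

lemma HasDerivAt.inner_eq_zero_of_norm_eq_one {f : ℝ → E} {f' : E} {t : ℝ}
    (hf : HasDerivAt f f' t) (h1 : ∀ u, ‖f u‖ = 1) : ⟪f t, f'⟫ = 0 := by
  have h := hf.inner_add_inner_eq_zero hf (c := 1) fun u => by
    rw [real_inner_self_eq_norm_sq, h1, one_pow]
  rw [real_inner_comm f'] at h ⊢
  linarith

noncomputable def unitTangent (σ : ℝ → E) (s : ℝ) : E := ‖deriv σ s‖⁻¹ • deriv σ s

lemma norm_unitTangent {σ : ℝ → E} {s : ℝ} (h : deriv σ s ≠ 0) : ‖unitTangent σ s‖ = 1 :=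
  norm_smul_inv_norm h

lemma exists_hasDerivAt_unitTangent {σ : ℝ → E} {s : ℝ} (hd : DifferentiableAt ℝ (deriv σ) s)
    (h : deriv σ s ≠ 0) :
    ∃ μ : ℝ, HasDerivAt (unitTangent σ)
      (‖deriv σ s‖⁻¹ • deriv (deriv σ) s + μ • deriv σ s) s :=
  ⟨_, (((hd.norm ℝ h).inv (norm_ne_zero_iff.mpr h)).hasDerivAt).smul hd.hasDerivAt⟩

end InnerProductSpace

theorem norm_cross3_deriv_sweep {σ : ℝ → ℝ³} (hσ : ContDiff ℝ 2 σ) (hunit : ∀ s, ‖σ s‖ = 1)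
    (hreg : ∀ s, deriv σ s ≠ 0) (s β : ℝ) :
    ‖cross3 (deriv (fun u => cos β • σ u + sin β • unitTangent σ u) s)
        (deriv (fun β => cos β • σ s + sin β • unitTangent σ s) β)‖
      = |sin β| * |⟪deriv (deriv σ) s, cross3 (σ s) (deriv σ s)⟫| / ‖deriv σ s‖ ^ 2 := by
  have hσd : ∀ u, HasDerivAt σ (deriv σ u) u := fun u =>
    (hσ.differentiable two_ne_zero u).hasDerivAt
  obtain ⟨μ, hT⟩ := exists_hasDerivAt_unitTangent (hσ.differentiable_deriv_two s) (hreg s)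
  set T := unitTangent σ
  set T' := ‖deriv σ s‖⁻¹ • deriv (deriv σ) s + μ • deriv σ s
  set ν := ‖deriv σ s‖
  have hν : ν ≠ 0 := norm_ne_zero_iff.mpr (hreg s)
  have hv : deriv σ s = ν • T s := (smul_inv_smul₀ hν _).symm
  have hσT : ∀ u, ⟪σ u, T u⟫ = 0 := fun u => by
    rw [show T u = ‖deriv σ u‖⁻¹ • deriv σ u from rfl, real_inner_smul_right,
      (hσd u).inner_eq_zero_of_norm_eq_one hunit, mul_zero]
  have hTT : ⟪T s, T s⟫ = 1 := by
    rw [real_inner_self_eq_norm_sq, norm_unitTangent (hreg s), one_pow]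
  have hTT' : ⟪T s, T'⟫ = 0 := hT.inner_eq_zero_of_norm_eq_one fun u => norm_unitTangent (hreg u)
  have hσT' : ⟪σ s, T'⟫ = -ν := by
    have h := (hσd s).inner_add_inner_eq_zero hT hσT
    rw [hv, real_inner_smul_left, hTT] at h
    linarith
  set W := T' + ν • σ s
  have hWσ : ⟪W, σ s⟫ = 0 := by
    rw [inner_add_left, real_inner_smul_left, real_inner_comm, hσT', real_inner_self_eq_norm_sq,
      hunit]
    ring
  have hWT : ⟪W, T s⟫ = 0 := by
    rw [inner_add_left, real_inner_smul_left, real_inner_comm, hTT', hσT]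
    ring
  have hWN : ⟪W, cross3 (σ s) (T s)⟫ = ⟪deriv (deriv σ) s, cross3 (σ s) (deriv σ s)⟫ / ν ^ 2 := by
    simp only [W, T', T, unitTangent, cross3_smul_right, inner_add_left, real_inner_smul_left,
      real_inner_smul_right, inner_cross3_self, inner_self_cross3]
    rw [show ‖deriv σ s‖ = ν from rfl]
    field_simp
    ring
  have hds : deriv (fun u => cos β • σ u + sin β • T u) s
      = ν • (-sin β • σ s + cos β • T s) + sin β • W := by
    refine ((((hσd s).const_smul (cos β)).add (hT.const_smul (sin β))).congr_deriv ?_).deriv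
    rw [hv]
    module
  have hdβ : deriv (fun β => cos β • σ s + sin β • T s) β = -sin β • σ s + cos β • T s := by
    refine ((((hasDerivAt_cos β).smul_const (σ s)).add
      ((hasDerivAt_sin β).smul_const (T s))).congr_deriv ?_).deriv
    rw [neg_smul]
  rw [hds, hdβ, norm_cross3_smul_add_sweep (hunit s) (norm_unitTangent (hreg s)) (hσT s) hWσ hWT,
    hWN, abs_div, abs_of_nonneg (sq_nonneg ν), mul_div_assoc]

theorem spherical_swept_area
    (σ : ℝ → EuclideanSpace ℝ (Fin 3)) (hσ : ContDiff ℝ 2 σ)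
    (hunit : ∀ s, ‖σ s‖ = 1) (hreg : ∀ s, deriv σ s ≠ 0)
    (r : ℝ → ℝ → EuclideanSpace ℝ (Fin 3))
    (hr : ∀ s β, r s β =
      Real.cos β • σ s + (Real.sin β / ‖deriv σ s‖) • deriv σ s) :
    (∀ s : ℝ, ∀ β ∈ Set.Icc (0:ℝ) Real.pi,
      ‖cross3 (deriv (fun u => r u β) s) (deriv (r s) β)‖
        = Real.sin β *
            |(inner ℝ (deriv (deriv σ) s) (cross3 (σ s) (deriv σ s)) : ℝ)| /
              ‖deriv σ s‖ ^ 2) ∧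
    ∀ θ ∈ Set.Icc (0:ℝ) Real.pi, ∀ s₁ s₂ : ℝ, s₁ ≤ s₂ →
      (∫ s in s₁..s₂, ∫ β in (0:ℝ)..θ,
          ‖cross3 (deriv (fun u => r u β) s) (deriv (r s) β)‖)
        = (1 - Real.cos θ) *
            ∫ s in s₁..s₂,
              |(inner ℝ (deriv (deriv σ) s) (cross3 (σ s) (deriv σ s)) : ℝ)| /
                ‖deriv σ s‖ ^ 2 := by
  obtain rfl : r = fun s β => cos β • σ s + sin β • unitTangent σ s :=
    funext₂ fun s β => by rw [hr, unitTangent, smul_smul, div_eq_mul_inv]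
  have hcross : ∀ s, ∀ β ∈ Set.Icc 0 π,
      ‖cross3 (deriv (fun u => cos β • σ u + sin β • unitTangent σ u) s)
          (deriv (fun β => cos β • σ s + sin β • unitTangent σ s) β)‖
        = sin β * |⟪deriv (deriv σ) s, cross3 (σ s) (deriv σ s)⟫| / ‖deriv σ s‖ ^ 2 :=
    fun s β hβ => by
      rw [norm_cross3_deriv_sweep hσ hunit hreg,
        abs_of_nonneg (sin_nonneg_of_nonneg_of_le_pi hβ.1 hβ.2)]
  refine ⟨hcross, fun θ hθ s₁ s₂ _ => ?_⟩
  calc _ = ∫ s in s₁..s₂, (1 - cos θ) *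
        (|⟪deriv (deriv σ) s, cross3 (σ s) (deriv σ s)⟫| / ‖deriv σ s‖ ^ 2) := by
        refine integral_congr fun s _ => ?_
        rw [integral_congr (g := fun β => sin β * _) fun β hβ => by
            rw [Set.uIcc_of_le hθ.1] at hβ
            rw [hcross s β ⟨hβ.1, hβ.2.trans hθ.2⟩, mul_div_assoc],
          integral_mul_const, integral_sin, cos_zero]
    _ = _ := integral_const_mul _ _
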